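/- arXiv:2605.02574 — 2 statements merged into one kernel-verified Lean document; each statement's English description precedes it below -/
import Mathlib

section
/- Let Σ symmetric positive definite, Λ ∈ ℝ^{n×m}, Q ∈ ℝ^{n×r} an orthonormal basis for the top r left singular vectors of Λ, P = Q(QᵀΣQ)⁻¹QᵀΣ, and R_f = (I-P)Λ with columns r_k. Then ‖R_fᵀ Σ R_f‖₂ ≤ tr(R_fᵀΣR_f) = Σ_{k=1}^m r_kᵀΣr_k ≤ m ‖Σ‖₂ σ_{r+1}(Λ)². -/
open Matrix

noncomputable def op2 {m n : ℕ} (A : Matrix (Fin m) (Fin n) ℝ) : ℝ :=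
  ‖LinearMap.toContinuousLinearMap (Matrix.toEuclideanLin A)‖

noncomputable def enorm2 {n : ℕ} (v : Fin n → ℝ) : ℝ :=
  Real.sqrt (∑ i, v i ^ 2)

/-- The (r+1)-st singular value, via the Eckart–Young characterization:
the distance (in operator 2-norm) to the set of matrices of rank at most r. -/
noncomputable def sval {n m : ℕ} (A : Matrix (Fin n) (Fin m) ℝ) (r : ℕ) : ℝ :=
  sInf {t | ∃ B : Matrix (Fin n) (Fin m) ℝ, B.rank ≤ r ∧ t = op2 (A - B)}

/-!
`Rᵀ S R` is positive semidefinite, hence of the form `Bᵀ B`, and `‖Bᵀ B‖ = ‖B‖²` is bounded by the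
squared Frobenius norm `tr (Bᵀ B)` (Cauchy–Schwarz row by row). For the column bound, `1 - P`
annihilates the columns of `Q`, so `r_k = (1 - P) y_k` with `y_k = (1 - Q Qᵀ) Λ e_k`. As `P` is
`S`-orthogonal, `(1 - P)ᵀ S (1 - P) = S - S P` with `S P = (Qᵀ S)ᵀ (Qᵀ S Q)⁻¹ (Qᵀ S) ≥ 0`, so
`r_kᵀ S r_k ≤ y_kᵀ S y_k ≤ ‖S‖ ‖y_k‖² ≤ ‖S‖ ‖(1 - Q Qᵀ) Λ‖² = ‖S‖ σ_{r+1}(Λ)²`.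
-/

open scoped Matrix.Norms.L2Operator

namespace Matrix
variable {m n : Type*} [Fintype m] [Fintype n]

lemma dotProduct_self_eq_norm_sq (x : n → ℝ) :
    x ⬝ᵥ x = ‖(WithLp.toLp 2 x : EuclideanSpace ℝ n)‖ ^ 2 := by
  rw [EuclideanSpace.real_norm_sq_eq]
  simp [dotProduct, sq]

lemma l2_opNorm_sq_le_trace_transpose_mul_self [DecidableEq n] (B : Matrix m n ℝ) :
    ‖B‖ ^ 2 ≤ (Bᵀ * B).trace := by
  have htr : (Bᵀ * B).trace = ∑ i, ∑ j, B i j ^ 2 := by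
    rw [Finset.sum_comm]
    simp only [trace, diag, mul_apply, transpose_apply, sq]
  have hrow (x : n → ℝ) : (B *ᵥ x) ⬝ᵥ (B *ᵥ x) ≤ (Bᵀ * B).trace * (x ⬝ᵥ x) := by
    rw [htr, Finset.sum_mul]
    refine Finset.sum_le_sum fun i _ => ?_
    simpa [sq, dotProduct, mulVec] using Finset.sum_mul_sq_le_sq_mul_sq Finset.univ (B i) x
  have htr_nonneg : 0 ≤ (Bᵀ * B).trace := htr ▸ by positivity
  rw [← Real.le_sqrt (norm_nonneg _) htr_nonneg]
  refine ContinuousLinearMap.opNorm_le_bound _ (Real.sqrt_nonneg _) fun x => ?_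
  rw [← Real.sqrt_sq (norm_nonneg x), ← Real.sqrt_mul htr_nonneg]
  apply Real.le_sqrt_of_sq_le
  have := hrow x.ofLp
  simp only [dotProduct_self_eq_norm_sq, WithLp.toLp_ofLp] at this
  exact this

lemma dotProduct_mulVec_le_l2_opNorm_mul [DecidableEq n] (S : Matrix n n ℝ) (y : n → ℝ) :
    y ⬝ᵥ (S *ᵥ y) ≤ ‖S‖ * (y ⬝ᵥ y) := by
  rw [dotProduct_self_eq_norm_sq, ← WithLp.ofLp_toLp 2 y, ← inner_toEuclideanCLM,
    WithLp.toLp_ofLp]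
  set T := toEuclideanCLM (n := n) (𝕜 := ℝ) S
  calc _ ≤ ‖WithLp.toLp 2 y‖ * ‖T (WithLp.toLp 2 y)‖ := real_inner_le_norm _ _
    _ ≤ ‖WithLp.toLp 2 y‖ * (‖T‖ * ‖WithLp.toLp 2 y‖) := by gcongr; exact T.le_opNorm _
    _ = ‖S‖ * ‖WithLp.toLp 2 y‖ ^ 2 := by rw [l2_opNorm_toEuclideanCLM]; ring

lemma mulVec_dotProduct_mulVec_le [DecidableEq n] (A : Matrix m n ℝ) (x : n → ℝ) :
    (A *ᵥ x) ⬝ᵥ (A *ᵥ x) ≤ ‖A‖ ^ 2 * (x ⬝ᵥ x) := by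
  rw [dotProduct_self_eq_norm_sq, dotProduct_self_eq_norm_sq, ← mul_pow]
  gcongr
  exact A.l2_opNorm_mulVec (WithLp.toLp 2 x)

open scoped MatrixOrder in
lemma PosSemidef.l2_opNorm_le_trace [DecidableEq n] {M : Matrix n n ℝ} (hM : M.PosSemidef) :
    ‖M‖ ≤ M.trace := by
  obtain ⟨B, rfl⟩ := CStarAlgebra.nonneg_iff_eq_star_mul_self.mp hM.nonneg
  rw [star_eq_conjTranspose, l2_opNorm_conjTranspose_mul_self, ← sq,
    conjTranspose_eq_transpose_of_trivial]
  exact l2_opNorm_sq_le_trace_transpose_mul_self B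

lemma dotProduct_transpose_mul_mul_mulVec {R : Type*} [CommSemiring R] (M : Matrix m n R)
    (A : Matrix m m R) (y : n → R) :
    y ⬝ᵥ ((Mᵀ * A * M) *ᵥ y) = (M *ᵥ y) ⬝ᵥ (A *ᵥ (M *ᵥ y)) := by
  rw [← mulVec_mulVec, ← mulVec_mulVec, mulVec_transpose, dotProduct_comm,
    ← dotProduct_mulVec, dotProduct_comm]

lemma trace_transpose_mul_mul_eq_sum [DecidableEq n] {R : Type*} [CommSemiring R]
    (S : Matrix m m R) (A : Matrix m n R) :
    (Aᵀ * S * A).trace = ∑ k, (A *ᵥ Pi.single k 1) ⬝ᵥ (S *ᵥ (A *ᵥ Pi.single k 1)) := by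
  refine Finset.sum_congr rfl fun k _ => ?_
  rw [← dotProduct_transpose_mul_mul_mulVec, mulVec_single_one, single_one_dotProduct]
  rfl

lemma PosDef.transpose_mul_mul_same {S : Matrix n n ℝ} {Q : Matrix n m ℝ} (hS : S.PosDef)
    (hQ : Function.Injective Q.mulVec) : (Qᵀ * S * Q).PosDef := by
  simpa only [conjTranspose_eq_transpose_of_trivial] using hS.conjTranspose_mul_mul_same hQ

end Matrix

section WeightedProjection

variable {n r : Type*} [Fintype n] [Fintype r] [DecidableEq r]

/-- The `S`-orthogonal projection onto the column space of `Q` (`P` in the paper). -/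
noncomputable def weightedProj (S : Matrix n n ℝ) (Q : Matrix n r ℝ) : Matrix n n ℝ :=
  Q * (Qᵀ * S * Q)⁻¹ * Qᵀ * S

variable {S : Matrix n n ℝ} {Q : Matrix n r ℝ}

lemma weightedProj_mul (hB : IsUnit (Qᵀ * S * Q).det) : weightedProj S Q * Q = Q := by
  rw [weightedProj, Matrix.mul_assoc _ S Q, Matrix.mul_assoc _ Qᵀ, ← Matrix.mul_assoc Qᵀ S Q,
    Matrix.mul_assoc Q, nonsing_inv_mul _ hB, Matrix.mul_one]

lemma weightedProj_mul_self (hB : IsUnit (Qᵀ * S * Q).det) :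
    weightedProj S Q * weightedProj S Q = weightedProj S Q := by
  calc weightedProj S Q * weightedProj S Q
      = weightedProj S Q * Q * ((Qᵀ * S * Q)⁻¹ * Qᵀ * S) := by
        simp only [weightedProj, Matrix.mul_assoc]
    _ = weightedProj S Q := by
        rw [weightedProj_mul hB]; simp only [weightedProj, Matrix.mul_assoc]

lemma mul_weightedProj (hS : S.IsSymm) :
    S * weightedProj S Q = (Qᵀ * S)ᵀ * (Qᵀ * S * Q)⁻¹ * (Qᵀ * S) := by
  rw [transpose_mul, hS.eq, transpose_transpose]
  simp only [weightedProj, Matrix.mul_assoc]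

lemma transpose_weightedProj_mul (hS : S.IsSymm) :
    (weightedProj S Q)ᵀ * S = S * weightedProj S Q := by
  have hB : (Qᵀ * S * Q)ᵀ = Qᵀ * S * Q := by
    rw [transpose_mul, transpose_mul, hS.eq, transpose_transpose, Matrix.mul_assoc]
  calc (weightedProj S Q)ᵀ * S = (S * weightedProj S Q)ᵀ := by
        rw [transpose_mul, hS.eq]
    _ = S * weightedProj S Q := by
        rw [mul_weightedProj hS, transpose_mul _ (Qᵀ * S), transpose_mul _ (Qᵀ * S * Q)⁻¹,
          transpose_nonsing_inv, hB, transpose_transpose, ← Matrix.mul_assoc]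

lemma one_sub_weightedProj_mul_one_sub [DecidableEq n] (hB : IsUnit (Qᵀ * S * Q).det) :
    (1 - weightedProj S Q) * (1 - Q * Qᵀ) = 1 - weightedProj S Q := by
  rw [Matrix.mul_sub, Matrix.mul_one, ← Matrix.mul_assoc, Matrix.sub_mul, Matrix.one_mul,
    weightedProj_mul hB, sub_self, Matrix.zero_mul, sub_zero]

lemma transpose_one_sub_weightedProj_mul_mul [DecidableEq n] (hS : S.IsSymm)
    (hB : IsUnit (Qᵀ * S * Q).det) :
    (1 - weightedProj S Q)ᵀ * S * (1 - weightedProj S Q)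
      = S - (Qᵀ * S)ᵀ * (Qᵀ * S * Q)⁻¹ * (Qᵀ * S) := by
  rw [transpose_sub, transpose_one, Matrix.sub_mul, transpose_weightedProj_mul hS,
    Matrix.one_mul, Matrix.sub_mul, Matrix.mul_sub, Matrix.mul_sub, Matrix.mul_one,
    Matrix.mul_one, Matrix.mul_assoc S, weightedProj_mul_self hB, sub_self, sub_zero,
    mul_weightedProj hS]

lemma dotProduct_mulVec_one_sub_weightedProj_le [DecidableEq n] (hS : S.IsSymm)
    (hB : (Qᵀ * S * Q).PosDef) (y : n → ℝ) :
    ((1 - weightedProj S Q) *ᵥ y) ⬝ᵥ (S *ᵥ ((1 - weightedProj S Q) *ᵥ y))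
      ≤ y ⬝ᵥ (S *ᵥ y) := by
  rw [← dotProduct_transpose_mul_mul_mulVec,
    transpose_one_sub_weightedProj_mul_mul hS (isUnit_iff_isUnit_det _ |>.mp hB.isUnit),
    sub_mulVec, dotProduct_sub, sub_le_self_iff, dotProduct_transpose_mul_mul_mulVec]
  simpa using hB.inv.posSemidef.dotProduct_mulVec_nonneg ((Qᵀ * S) *ᵥ y)

end WeightedProjection

lemma dotProduct_mulVec_one_sub_weightedProj_mul_col_le {n m r : Type*} [Fintype n] [Fintype m]
    [Fintype r] [DecidableEq n] [DecidableEq m] [DecidableEq r] {S : Matrix n n ℝ} (hS : S.PosDef)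
    {Q : Matrix n r ℝ} (hQ : Qᵀ * Q = 1) (Λ : Matrix n m ℝ) (k : m) :
    (((1 - weightedProj S Q) * Λ) *ᵥ Pi.single k 1) ⬝ᵥ
        (S *ᵥ (((1 - weightedProj S Q) * Λ) *ᵥ Pi.single k 1))
      ≤ ‖S‖ * ‖(1 - Q * Qᵀ) * Λ‖ ^ 2 := by
  have hQinj : Function.Injective Q.mulVec :=
    Function.LeftInverse.injective (g := Qᵀ.mulVec) fun x => by
      rw [mulVec_mulVec, hQ, one_mulVec]
  have hB := hS.transpose_mul_mul_same hQinj
  set y := ((1 - Q * Qᵀ) * Λ) *ᵥ Pi.single k 1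
  have hy : ((1 - weightedProj S Q) * Λ) *ᵥ Pi.single k 1 = (1 - weightedProj S Q) *ᵥ y := by
    rw [mulVec_mulVec, ← Matrix.mul_assoc,
      one_sub_weightedProj_mul_one_sub (isUnit_iff_isUnit_det _ |>.mp hB.isUnit)]
  calc _ ≤ y ⬝ᵥ (S *ᵥ y) := hy ▸ dotProduct_mulVec_one_sub_weightedProj_le
        (isHermitian_iff_isSymm.mp hS.isHermitian) hB y
    _ ≤ ‖S‖ * (y ⬝ᵥ y) := dotProduct_mulVec_le_l2_opNorm_mul S y
    _ ≤ ‖S‖ * ‖(1 - Q * Qᵀ) * Λ‖ ^ 2 := by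
        gcongr
        simpa only [single_one_dotProduct, Pi.single_eq_same, mul_one] using
          mulVec_dotProduct_mulVec_le ((1 - Q * Qᵀ) * Λ) (Pi.single k 1)

/-- Covariance error bound: ‖R_fᵀΣR_f‖₂ ≤ tr(R_fᵀΣR_f) = Σₖ rₖᵀΣrₖ ≤ m‖Σ‖₂σ_{r+1}(Λ)². -/
theorem stmt16 {n m r : ℕ} (S : Matrix (Fin n) (Fin n) ℝ) (hS : S.PosDef)
    (Λ : Matrix (Fin n) (Fin m) ℝ)
    (Q : Matrix (Fin n) (Fin r) ℝ) (hQ : Qᵀ * Q = 1)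
    (hTop : op2 ((1 - Q * Qᵀ) * Λ) = sval Λ r) :
    op2 (((1 - Q * (Qᵀ * S * Q)⁻¹ * Qᵀ * S) * Λ)ᵀ * S *
          ((1 - Q * (Qᵀ * S * Q)⁻¹ * Qᵀ * S) * Λ))
        ≤ (((1 - Q * (Qᵀ * S * Q)⁻¹ * Qᵀ * S) * Λ)ᵀ * S *
          ((1 - Q * (Qᵀ * S * Q)⁻¹ * Qᵀ * S) * Λ)).trace
      ∧ (((1 - Q * (Qᵀ * S * Q)⁻¹ * Qᵀ * S) * Λ)ᵀ * S *
          ((1 - Q * (Qᵀ * S * Q)⁻¹ * Qᵀ * S) * Λ)).trace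
        = ∑ k : Fin m,
            (((1 - Q * (Qᵀ * S * Q)⁻¹ * Qᵀ * S) * Λ) *ᵥ Pi.single k 1) ⬝ᵥ
              (S *ᵥ (((1 - Q * (Qᵀ * S * Q)⁻¹ * Qᵀ * S) * Λ) *ᵥ Pi.single k 1))
      ∧ (((1 - Q * (Qᵀ * S * Q)⁻¹ * Qᵀ * S) * Λ)ᵀ * S *
          ((1 - Q * (Qᵀ * S * Q)⁻¹ * Qᵀ * S) * Λ)).trace
        ≤ (m : ℝ) * op2 S * sval Λ r ^ 2 := by
  set R := (1 - Q * (Qᵀ * S * Q)⁻¹ * Qᵀ * S) * Λ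
  have hPSD : (Rᵀ * S * R).PosSemidef := by
    simpa only [conjTranspose_eq_transpose_of_trivial] using
      hS.posSemidef.conjTranspose_mul_mul_same R
  have htrace := trace_transpose_mul_mul_eq_sum S R
  refine ⟨hPSD.l2_opNorm_le_trace, htrace, ?_⟩
  calc (Rᵀ * S * R).trace ≤ ∑ _k : Fin m, op2 S * sval Λ r ^ 2 :=
        htrace ▸ Finset.sum_le_sum fun k _ =>
          hTop ▸ dotProduct_mulVec_one_sub_weightedProj_mul_col_le hS hQ Λ k
    _ = m * op2 S * sval Λ r ^ 2 := by
        rw [Finset.sum_const, Finset.card_univ, Fintype.card_fin, nsmul_eq_mul, mul_assoc]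
end

section
/- Let Σ symmetric positive definite, Λ ∈ ℝ^{n×m}, Q ∈ ℝ^{n×r} an orthonormal basis of the top r left singular vectors of Λ, P = Q(QᵀΣQ)⁻¹QᵀΣ, and y ∈ ℝ^n. Then ‖((I-P)Λ)ᵀ y‖₂ ≤ √m · √‖Σ‖₂ · σ_{r+1}(Λ) · √(yᵀΣ⁻¹y). -/
open Matrix

/-!
Write `M = 1 - P` for the `Σ`-orthogonal projection `P = Q (QᵀΣQ)⁻¹ QᵀΣ`. Since `MQ = 0`, the
matrix `MΛ` equals `MB` with `B = (1 - QQᵀ)Λ`, whose operator norm is `σ_{r+1}(Λ)`. The `k`-th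
entry of `(MΛ)ᵀy` is `c ⬝ y` for the column `c = M b` of `MB`, and the weighted Cauchy–Schwarz
inequality bounds its square by `(cᵀΣc)(yᵀΣ⁻¹y)`. As `M` is a contraction for the `Σ`-norm,
`cᵀΣc ≤ bᵀΣb ≤ ‖Σ‖₂ ‖b‖² ≤ ‖Σ‖₂ ‖B‖₂²`; summing the `m` squared entries gives the factor `√m`.
-/

open scoped Matrix.Norms.L2Operator

variable {ι κ μ : Type*} [Fintype ι] [Fintype κ] [Fintype μ]

theorem op2_eq_l2_opNorm {m n : ℕ} (A : Matrix (Fin m) (Fin n) ℝ) : op2 A = ‖A‖ := rfl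

theorem dotProduct_self_eq_norm_toLp_sq (v : ι → ℝ) : v ⬝ᵥ v = ‖WithLp.toLp 2 v‖ ^ 2 := by
  rw [← real_inner_self_eq_norm_sq, EuclideanSpace.inner_eq_star_dotProduct]
  simp

theorem Matrix.dotProduct_mulVec_le_l2_opNorm_mul_s17 [DecidableEq ι] (A : Matrix ι ι ℝ)
    (v : ι → ℝ) : v ⬝ᵥ A *ᵥ v ≤ ‖A‖ * (v ⬝ᵥ v) := by
  have h := real_inner_le_norm (WithLp.toLp 2 v) (toEuclideanCLM (𝕜 := ℝ) A (WithLp.toLp 2 v))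
  rw [inner_toEuclideanCLM] at h
  calc v ⬝ᵥ A *ᵥ v ≤ _ := h
    _ ≤ ‖WithLp.toLp 2 v‖ * (‖A‖ * ‖WithLp.toLp 2 v‖) := by
        gcongr; exact (toEuclideanCLM (𝕜 := ℝ) A).le_opNorm _
    _ = ‖A‖ * (v ⬝ᵥ v) := by rw [dotProduct_self_eq_norm_toLp_sq]; ring

theorem Matrix.col_dotProduct_self_le_l2_opNorm_sq [DecidableEq κ] (A : Matrix ι κ ℝ) (k : κ) :
    A.col k ⬝ᵥ A.col k ≤ ‖A‖ ^ 2 := by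
  have h := A.l2_opNorm_mulVec (EuclideanSpace.single k 1)
  rw [PiLp.norm_single, norm_one, mul_one] at h
  rw [← mulVec_single_one, dotProduct_self_eq_norm_toLp_sq]
  gcongr
  simpa using h

theorem Matrix.PosSemidef.sq_dotProduct_mulVec_le {S : Matrix ι ι ℝ} (hS : S.PosSemidef)
    (u v : ι → ℝ) : (u ⬝ᵥ S *ᵥ v) ^ 2 ≤ (u ⬝ᵥ S *ᵥ u) * (v ⬝ᵥ S *ᵥ v) := by
  let := S.toSeminormedAddCommGroup hS
  let := S.toInnerProductSpace hS
  have h := real_inner_mul_inner_self_le u v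
  have hinner : ∀ x y : ι → ℝ, (inner ℝ x y : ℝ) = x ⬝ᵥ S *ᵥ y := fun x y => by
    change (S *ᵥ y) ⬝ᵥ star x = _
    rw [star_trivial, dotProduct_comm]
  rwa [hinner, hinner, hinner, ← sq] at h

theorem Matrix.PosDef.sq_dotProduct_le [DecidableEq ι] {S : Matrix ι ι ℝ} (hS : S.PosDef)
    (u v : ι → ℝ) : (u ⬝ᵥ v) ^ 2 ≤ (u ⬝ᵥ S *ᵥ u) * (v ⬝ᵥ S⁻¹ *ᵥ v) := by
  have h := hS.posSemidef.sq_dotProduct_mulVec_le u (S⁻¹ *ᵥ v)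
  rwa [mulVec_mulVec, mul_nonsing_inv _ hS.det_pos.ne'.isUnit, one_mulVec,
    dotProduct_comm (S⁻¹ *ᵥ v)] at h

theorem Matrix.PosSemidef.dotProduct_mulVec_le_add {S : Matrix ι ι ℝ} (hS : S.PosSemidef)
    {u w : ι → ℝ} (h : w ⬝ᵥ S *ᵥ u = 0) :
    u ⬝ᵥ S *ᵥ u ≤ (u + w) ⬝ᵥ S *ᵥ (u + w) := by
  have hsymm : u ⬝ᵥ S *ᵥ w = w ⬝ᵥ S *ᵥ u := by
    rw [dotProduct_mulVec, ← mulVec_transpose, dotProduct_comm,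
      ← conjTranspose_eq_transpose_of_trivial, hS.isHermitian.eq]
  have hw : 0 ≤ w ⬝ᵥ S *ᵥ w := by simpa using hS.dotProduct_mulVec_nonneg w
  simp only [mulVec_add, dotProduct_add, add_dotProduct, hsymm, h]
  linarith

noncomputable def obliqueProj [DecidableEq κ] (S : Matrix ι ι ℝ) (Q : Matrix ι κ ℝ) :
    Matrix ι ι ℝ :=
  Q * (Qᵀ * S * Q)⁻¹ * Qᵀ * S

section obliqueProj

variable [DecidableEq ι] [DecidableEq κ] {S : Matrix ι ι ℝ} {Q : Matrix ι κ ℝ}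

theorem one_sub_obliqueProj_mul_self (hG : IsUnit (Qᵀ * S * Q).det) :
    (1 - obliqueProj S Q) * Q = 0 := by
  have h := nonsing_inv_mul _ hG
  simp only [Matrix.mul_assoc] at h
  simp only [obliqueProj, Matrix.sub_mul, Matrix.one_mul, Matrix.mul_assoc, h, Matrix.mul_one,
    sub_self]

theorem transpose_mul_mul_one_sub_obliqueProj (hG : IsUnit (Qᵀ * S * Q).det) :
    Qᵀ * S * (1 - obliqueProj S Q) = 0 := by
  simp only [obliqueProj, Matrix.mul_sub, Matrix.mul_one, ← Matrix.mul_assoc,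
    mul_nonsing_inv _ hG, Matrix.one_mul, sub_self]

theorem dotProduct_mulVec_one_sub_obliqueProj_le (hS : S.PosSemidef)
    (hG : IsUnit (Qᵀ * S * Q).det) (x : ι → ℝ) :
    ((1 - obliqueProj S Q) *ᵥ x) ⬝ᵥ S *ᵥ ((1 - obliqueProj S Q) *ᵥ x) ≤ x ⬝ᵥ S *ᵥ x := by
  have hPx : obliqueProj S Q *ᵥ x = Q *ᵥ (((Qᵀ * S * Q)⁻¹ * Qᵀ * S) *ᵥ x) := by
    simp only [obliqueProj, mulVec_mulVec, Matrix.mul_assoc]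
  have horth : (obliqueProj S Q *ᵥ x) ⬝ᵥ S *ᵥ ((1 - obliqueProj S Q) *ᵥ x) = 0 := by
    rw [hPx, ← vecMul_transpose, ← dotProduct_mulVec, mulVec_mulVec, mulVec_mulVec,
      transpose_mul_mul_one_sub_obliqueProj hG, zero_mulVec, dotProduct_zero]
  simpa [sub_mulVec] using hS.dotProduct_mulVec_le_add horth

theorem sq_one_sub_obliqueProj_mul_transpose_mulVec_apply_le [DecidableEq μ] (hS : S.PosDef)
    (hG : IsUnit (Qᵀ * S * Q).det) (B : Matrix ι μ ℝ) (y : ι → ℝ) (k : μ) :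
    (((1 - obliqueProj S Q) * B)ᵀ *ᵥ y) k ^ 2 ≤ ‖S‖ * ‖B‖ ^ 2 * (y ⬝ᵥ S⁻¹ *ᵥ y) := by
  set M := 1 - obliqueProj S Q
  have hentry : ((M * B)ᵀ *ᵥ y) k = (M *ᵥ B.col k) ⬝ᵥ y := by
    rw [← mulVec_single_one, mulVec_mulVec, mulVec_single_one]
    rfl
  have hd : 0 ≤ y ⬝ᵥ S⁻¹ *ᵥ y := by simpa using hS.inv.posSemidef.dotProduct_mulVec_nonneg y
  calc ((M * B)ᵀ *ᵥ y) k ^ 2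
      ≤ ((M *ᵥ B.col k) ⬝ᵥ S *ᵥ (M *ᵥ B.col k)) * (y ⬝ᵥ S⁻¹ *ᵥ y) :=
        hentry ▸ hS.sq_dotProduct_le _ _
    _ ≤ (B.col k ⬝ᵥ S *ᵥ B.col k) * (y ⬝ᵥ S⁻¹ *ᵥ y) := by
        gcongr; exact dotProduct_mulVec_one_sub_obliqueProj_le hS.posSemidef hG _
    _ ≤ ‖S‖ * (B.col k ⬝ᵥ B.col k) * (y ⬝ᵥ S⁻¹ *ᵥ y) := by
        gcongr; exact S.dotProduct_mulVec_le_l2_opNorm_mul_s17 _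
    _ ≤ ‖S‖ * ‖B‖ ^ 2 * (y ⬝ᵥ S⁻¹ *ᵥ y) := by
        gcongr; exact B.col_dotProduct_self_le_l2_opNorm_sq k

end obliqueProj

theorem enorm2_le_sqrt_mul_sqrt {m : ℕ} (v : Fin m → ℝ) {c : ℝ} (h : ∀ k, v k ^ 2 ≤ c) :
    enorm2 v ≤ Real.sqrt m * Real.sqrt c := by
  rw [enorm2, ← Real.sqrt_mul (Nat.cast_nonneg m)]
  gcongr
  calc ∑ k, v k ^ 2 ≤ ∑ _k : Fin m, c := Finset.sum_le_sum fun k _ => h k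
    _ = m * c := by simp

/-- Conditional-mean error bound: ‖((I−P)Λ)ᵀy‖₂ ≤ √m·√‖Σ‖₂·σ_{r+1}(Λ)·√(yᵀΣ⁻¹y). -/
theorem stmt17 {n m r : ℕ} (S : Matrix (Fin n) (Fin n) ℝ) (hS : S.PosDef)
    (Λ : Matrix (Fin n) (Fin m) ℝ)
    (Q : Matrix (Fin n) (Fin r) ℝ) (hQ : Qᵀ * Q = 1)
    (hTop : op2 ((1 - Q * Qᵀ) * Λ) = sval Λ r)
    (y : Fin n → ℝ) :
    enorm2 ((((1 - Q * (Qᵀ * S * Q)⁻¹ * Qᵀ * S) * Λ)ᵀ) *ᵥ y)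
      ≤ Real.sqrt m * Real.sqrt (op2 S) * sval Λ r * Real.sqrt (y ⬝ᵥ (S⁻¹ *ᵥ y)) := by
  change enorm2 (((1 - obliqueProj S Q) * Λ)ᵀ *ᵥ y) ≤ _
  have hQinj : Function.Injective Q.mulVec := fun x x' h => by
    simpa [mulVec_mulVec, hQ] using congrArg (Qᵀ *ᵥ ·) h
  have hG : IsUnit (Qᵀ * S * Q).det := by
    have := hS.conjTranspose_mul_mul_same hQinj
    rw [conjTranspose_eq_transpose_of_trivial] at this
    exact this.det_pos.ne'.isUnit
  set B := (1 - Q * Qᵀ) * Λ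
  have hΛ : (1 - obliqueProj S Q) * Λ = (1 - obliqueProj S Q) * B := by
    rw [← Matrix.mul_assoc, Matrix.mul_sub, Matrix.mul_one, ← Matrix.mul_assoc,
      one_sub_obliqueProj_mul_self hG, Matrix.zero_mul, sub_zero]
  rw [← hTop, hΛ, op2_eq_l2_opNorm, op2_eq_l2_opNorm]
  refine (enorm2_le_sqrt_mul_sqrt _ fun k =>
    sq_one_sub_obliqueProj_mul_transpose_mulVec_apply_le hS hG B y k).trans_eq ?_
  rw [Real.sqrt_mul (by positivity), Real.sqrt_mul (by positivity),
    Real.sqrt_sq (norm_nonneg B)]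
  ring
end
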